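/- Let X and Y be Banach spaces, let A be a tree on S_X and B be a tree on S_Y, and let Ψ be an order isomorphism from A to B with the property that whenever x ∈ A and (x_k) ⊂ S_X is a normalized weakly null sequence with (x, x_k) ∈ A for all k, then there is a normalized weakly null sequence (y_k) ⊂ S_Y such that Ψ(x, x_k) = (Ψ(x), y_k) for all k. Then for every ordinal α one has Ψ(A^(α)) ⊆ B^(α). -/

import Mathlib

open Metric Set Filter TopologicalSpace
open scoped ENNReal

noncomputable section

/-- A set `U` in the dual of `X` is weak\*-open if every point of `U` has a basic weak\*
neighborhood (determined by finitely many points of `X`) contained in `U`. -/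
def IsWeakStarOpen {X : Type*} [NormedAddCommGroup X] [NormedSpace ℝ X]
    (U : Set (X →L[ℝ] ℝ)) : Prop :=
  ∀ f ∈ U, ∃ (n : ℕ) (x : Fin n → X) (δ : ℝ), 0 < δ ∧
    ∀ g : X →L[ℝ] ℝ, (∀ i, |g (x i) - f (x i)| < δ) → g ∈ U

/-- The Szlenk derivation: remove all points of `K` lying in a relatively weak\*-open
subset of `K` of norm diameter less than `ε`. -/
def szlenkDeriv {X : Type*} [NormedAddCommGroup X] [NormedSpace ℝ X]
    (ε : ℝ) (K : Set (X →L[ℝ] ℝ)) : Set (X →L[ℝ] ℝ) :=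
  {f | f ∈ K ∧ ¬ ∃ U : Set (X →L[ℝ] ℝ), IsWeakStarOpen U ∧ f ∈ U ∧
    EMetric.diam (K ∩ U) < ENNReal.ofReal ε}

/-- The dentability derivation: remove all points of `K` lying in a weak\*-slice of `K`
of norm diameter less than `ε`. -/
def dentDeriv {X : Type*} [NormedAddCommGroup X] [NormedSpace ℝ X]
    (ε : ℝ) (K : Set (X →L[ℝ] ℝ)) : Set (X →L[ℝ] ℝ) :=
  {f | f ∈ K ∧ ¬ ∃ (x : X) (t : ℝ), t < f x ∧
    EMetric.diam {g | g ∈ K ∧ t < g x} < ENNReal.ofReal ε}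

/-- Transfinite iteration of a set derivation, with intersections at limit stages. -/
def derivIter {α : Type*} (D : Set α → Set α) (K : Set α) (o : Ordinal.{0}) : Set α :=
  Ordinal.limitRecOn o K (fun _ ih => D ih) (fun o _ ih => ⋂ (β : {β : Ordinal.{0} // β < o}), ih β.1 β.2)

open scoped Classical in
/-- The ordinal index associated with a derivation: the least ordinal at which the iterated
derived set of `K` is empty, or `⊤` (i.e. `∞`) if the derived sets are never empty. -/
def derivIndex {α : Type*} (D : Set α → Set α) (K : Set α) : WithTop Ordinal.{0} :=
  if ∃ o : Ordinal.{0}, derivIter D K o = ∅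
    then ((sInf {o : Ordinal.{0} | derivIter D K o = ∅} : Ordinal.{0}) : WithTop Ordinal.{0})
    else ⊤

/-- The `ε`-Szlenk index `Sz(X,ε)`. -/
def SzEps (X : Type*) [NormedAddCommGroup X] [NormedSpace ℝ X] (ε : ℝ) : WithTop Ordinal.{0} :=
  derivIndex (szlenkDeriv (X := X) ε) (closedBall (0 : X →L[ℝ] ℝ) 1)

/-- The Szlenk index `Sz(X) = sup_{ε > 0} Sz(X,ε)`. -/
def Sz (X : Type*) [NormedAddCommGroup X] [NormedSpace ℝ X] : WithTop Ordinal.{0} :=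
  ⨆ ε : {ε : ℝ // 0 < ε}, SzEps X ε.1

/-- The `ε`-weak\*-dentability index `Dz(X,ε)`. -/
def DzEps (X : Type*) [NormedAddCommGroup X] [NormedSpace ℝ X] (ε : ℝ) : WithTop Ordinal.{0} :=
  derivIndex (dentDeriv (X := X) ε) (closedBall (0 : X →L[ℝ] ℝ) 1)

/-- The weak\*-dentability index `Dz(X) = sup_{ε > 0} Dz(X,ε)`. -/
def Dz (X : Type*) [NormedAddCommGroup X] [NormedSpace ℝ X] : WithTop Ordinal.{0} :=
  ⨆ ε : {ε : ℝ // 0 < ε}, DzEps X ε.1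

/-- `L_p(X)`: the space of `X`-valued Bochner `p`-integrable functions on `[0,1]`. -/
abbrev LpOn (X : Type*) [NormedAddCommGroup X] (p : ℝ≥0∞) :=
  MeasureTheory.Lp (α := ℝ) X p ((MeasureTheory.volume : MeasureTheory.Measure ℝ).restrict (Icc 0 1))

/-- A normalized weakly null sequence. -/
def IsNormalizedWeaklyNull {X : Type*} [NormedAddCommGroup X] [NormedSpace ℝ X] (y : ℕ → X) : Prop :=
  (∀ n, ‖y n‖ = 1) ∧ ∀ f : X →L[ℝ] ℝ, Tendsto (fun n => f (y n)) atTop (nhds 0)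

/-- A tree on the unit sphere of `X`: a nonempty set of finite sequences of norm one vectors,
closed under taking initial segments. -/
def IsTreeOnSphere {X : Type*} [NormedAddCommGroup X] (A : Set (List X)) : Prop :=
  A.Nonempty ∧ (∀ l ∈ A, ∀ x ∈ l, ‖x‖ = 1) ∧ ∀ l ∈ A, ∀ l' : List X, l' <+: l → l' ∈ A

/-- A hereditary tree (H-tree) on the unit sphere of `X`: a tree containing all
subsequences of each of its members. -/
def IsHTree {X : Type*} [NormedAddCommGroup X] (A : Set (List X)) : Prop :=
  IsTreeOnSphere A ∧ ∀ l ∈ A, ∀ l' : List X, List.Sublist l' l → l' ∈ A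

/-- The weak derivative of a tree: all members which admit extensions inside the tree along a
normalized weakly null sequence, together with all initial segments of such members. -/
def weakDeriv {X : Type*} [NormedAddCommGroup X] [NormedSpace ℝ X] (A : Set (List X)) :
    Set (List X) :=
  {l | ∃ m ∈ A, l <+: m ∧ ∃ y : ℕ → X, IsNormalizedWeaklyNull y ∧ ∀ n, m ++ [y n] ∈ A}

/-- The weak index `I_w` of a tree on the unit sphere. -/
def Iw {X : Type*} [NormedAddCommGroup X] [NormedSpace ℝ X] (A : Set (List X)) :
    WithTop Ordinal.{0} :=
  derivIndex weakDeriv A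

/-- The tree `F_ρ^X` of finite normalized sequences which `ρ`-dominate the positive part of
the `ℓ_1` norm. -/
def FTree (X : Type*) [NormedAddCommGroup X] [NormedSpace ℝ X] (ρ : ℝ) : Set (List X) :=
  {l | (∀ x ∈ l, ‖x‖ = 1) ∧ ∀ a : ℕ → ℝ, (∀ i, 0 ≤ a i) →
    ρ * (∑ i ∈ Finset.range l.length, a i) ≤ ‖∑ i ∈ Finset.range l.length, a i • l.getD i 0‖}

/-- A finite sequence is `c`-basic if partial sums of linear combinations are dominated,
with constant `c`, by the full linear combination. -/
def IsCBasicSeq {X : Type*} [NormedAddCommGroup X] [NormedSpace ℝ X] (c : ℝ) (l : List X) : Prop :=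
  ∀ a : ℕ → ℝ, ∀ m ≤ l.length,
    ‖∑ i ∈ Finset.range m, a i • l.getD i 0‖ ≤
      c * ‖∑ i ∈ Finset.range l.length, a i • l.getD i 0‖

/-- An order isomorphism between trees: injective on `A`, mapping `A` into `B`, and preserving
and reflecting the strict initial-segment order. -/
def IsTreeOrderIso {X Y : Type*} (A : Set (List X)) (B : Set (List Y))
    (Ψ : List X → List Y) : Prop :=
  (∀ l ∈ A, Ψ l ∈ B) ∧ Set.InjOn Ψ A ∧
    ∀ l ∈ A, ∀ m ∈ A, ((Ψ l <+: Ψ m ∧ Ψ l ≠ Ψ m) ↔ (l <+: m ∧ l ≠ m))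

/-- Condition (2.1.1): `Ψ` maps weakly null extensions in `A` to weakly null extensions. -/
def MapsWeaklyNullExtensions {X Y : Type*} [NormedAddCommGroup X] [NormedSpace ℝ X]
    [NormedAddCommGroup Y] [NormedSpace ℝ Y] (A : Set (List X)) (Ψ : List X → List Y) : Prop :=
  ∀ l ∈ A, ∀ x : ℕ → X, IsNormalizedWeaklyNull x → (∀ k, l ++ [x k] ∈ A) →
    ∃ y : ℕ → Y, IsNormalizedWeaklyNull y ∧ ∀ k, Ψ (l ++ [x k]) = Ψ l ++ [y k]

/-- `C([0,β])`: the space of continuous functions on the ordinal interval `[0,β]`. -/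
abbrev COrd (β : Ordinal.{0}) := BoundedContinuousFunction (Iic β) ℝ
/-!
Transfinite induction on `α`; limit stages are intersections on both sides. For the successor
step, let `l ≼ m` with `m ∈ A^(α)` and `(m, y_n) ∈ A^(α)` along a normalized weakly null `(y_n)`.
The hypothesis on `Ψ` gives a normalized weakly null `(z_n)` with
`Ψ(m, y_n) = (Ψ m, z_n) ∈ B^(α)`, so `Ψ m ∈ B^(α+1)`, and `Ψ l ≼ Ψ m` because `Ψ` preserves the
order; hence `Ψ l ∈ B^(α+1)`.
-/

def IsPrefixClosed {X : Type*} (A : Set (List X)) : Prop :=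
  ∀ l ∈ A, ∀ l' : List X, l' <+: l → l' ∈ A

section derivIter

variable {α : Type*} (D : Set α → Set α) (K : Set α)

theorem derivIter_zero : derivIter D K 0 = K :=
  Ordinal.limitRecOn_zero ..

theorem derivIter_add_one (o : Ordinal.{0}) :
    derivIter D K (o + 1) = D (derivIter D K o) :=
  Ordinal.limitRecOn_add_one ..

theorem derivIter_limit {o : Ordinal.{0}} (ho : Order.IsSuccLimit o) :
    derivIter D K o = ⋂ β : {β : Ordinal.{0} // β < o}, derivIter D K β.1 :=
  Ordinal.limitRecOn_limit _ _ _ _ ho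

variable {D K}

theorem derivIter_subset_self (hD : ∀ o, D (derivIter D K o) ⊆ derivIter D K o)
    (o : Ordinal.{0}) : derivIter D K o ⊆ K := by
  induction o using Ordinal.limitRecOn with
  | zero => rw [derivIter_zero]
  | add_one o ih => rw [derivIter_add_one]; exact (hD o).trans ih
  | limit o ho ih =>
    rw [derivIter_limit D K ho]
    exact (iInter_subset _ ⟨0, ho.pos⟩).trans (ih 0 ho.pos)

theorem image_derivIter_subset_of_succ {β : Type*} {E : Set β → Set β} {L : Set β}
    {f : α → β} (h₀ : f '' K ⊆ L)
    (hsucc : ∀ o, f '' derivIter D K o ⊆ derivIter E L o →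
      f '' D (derivIter D K o) ⊆ E (derivIter E L o))
    (o : Ordinal.{0}) : f '' derivIter D K o ⊆ derivIter E L o := by
  induction o using Ordinal.limitRecOn with
  | zero => rwa [derivIter_zero, derivIter_zero]
  | add_one o ih => rw [derivIter_add_one, derivIter_add_one]; exact hsucc o ih
  | limit o ho ih =>
    rw [derivIter_limit D K ho, derivIter_limit E L ho]
    exact (image_iInter_subset _ f).trans (iInter_mono fun β => ih β.1 β.2)

end derivIter

section weakDeriv

variable {X : Type*} [NormedAddCommGroup X] [NormedSpace ℝ X]

theorem isPrefixClosed_weakDeriv (A : Set (List X)) : IsPrefixClosed (weakDeriv A) := by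
  rintro l ⟨m, hm, hlm, hy⟩ l' hl'
  exact ⟨m, hm, hl'.trans hlm, hy⟩

theorem weakDeriv_subset {A : Set (List X)} (hA : IsPrefixClosed A) : weakDeriv A ⊆ A := by
  rintro l ⟨m, hm, hlm, -⟩
  exact hA m hm l hlm

theorem isPrefixClosed_derivIter_weakDeriv {A : Set (List X)} (hA : IsPrefixClosed A)
    (o : Ordinal.{0}) : IsPrefixClosed (derivIter weakDeriv A o) := by
  induction o using Ordinal.limitRecOn with
  | zero => rwa [derivIter_zero]
  | add_one o _ =>
    rw [derivIter_add_one]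
    exact isPrefixClosed_weakDeriv _
  | limit o ho ih =>
    rw [derivIter_limit _ _ ho]
    intro l hl l' hl'
    exact mem_iInter.2 fun β => ih β.1 β.2 l (mem_iInter.1 hl β) l' hl'

theorem derivIter_weakDeriv_subset {A : Set (List X)} (hA : IsPrefixClosed A)
    (o : Ordinal.{0}) : derivIter weakDeriv A o ⊆ A :=
  derivIter_subset_self (fun o => weakDeriv_subset (isPrefixClosed_derivIter_weakDeriv hA o)) o

end weakDeriv

theorem IsTreeOrderIso.prefix_of_prefix {X Y : Type*} {A : Set (List X)} {B : Set (List Y)}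
    {Ψ : List X → List Y} (hΨ : IsTreeOrderIso A B Ψ) {l m : List X} (hl : l ∈ A) (hm : m ∈ A)
    (hlm : l <+: m) : Ψ l <+: Ψ m := by
  rcases eq_or_ne l m with rfl | hne
  · exact List.prefix_rfl
  · exact ((hΨ.2.2 l hl m hm).2 ⟨hlm, hne⟩).1

theorem image_weakDeriv_subset {X Y : Type*} [NormedAddCommGroup X] [NormedSpace ℝ X]
    [NormedAddCommGroup Y] [NormedSpace ℝ Y] {A S : Set (List X)} {B T : Set (List Y)}
    {Ψ : List X → List Y} (hA : IsPrefixClosed A) (hΨ : IsTreeOrderIso A B Ψ)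
    (hExt : MapsWeaklyNullExtensions A Ψ) (hSA : S ⊆ A) (hST : Ψ '' S ⊆ T) :
    Ψ '' weakDeriv S ⊆ weakDeriv T := by
  rintro _ ⟨l, ⟨m, hm, hlm, y, hy, hext⟩, rfl⟩
  have hmA : m ∈ A := hSA hm
  obtain ⟨z, hz, hΨz⟩ := hExt m hmA y hy fun k => hSA (hext k)
  refine ⟨Ψ m, hST (mem_image_of_mem Ψ hm), hΨ.prefix_of_prefix (hA m hmA l hlm) hmA hlm, z, hz,
    fun n => ?_⟩
  rw [← hΨz n]
  exact hST (mem_image_of_mem Ψ (hext n))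

theorem image_derivIter_subset_general
    (X Y : Type) [NormedAddCommGroup X] [NormedSpace ℝ X]
    [NormedAddCommGroup Y] [NormedSpace ℝ Y]
    (A : Set (List X)) (B : Set (List Y))
    (hA : IsTreeOnSphere A)
    (Ψ : List X → List Y) (hΨ : IsTreeOrderIso A B Ψ)
    (hExt : MapsWeaklyNullExtensions A Ψ) :
    ∀ α : Ordinal.{0}, Ψ '' derivIter weakDeriv A α ⊆ derivIter weakDeriv B α := by
  have hApre : IsPrefixClosed A := hA.2.2
  exact image_derivIter_subset_of_succ (image_subset_iff.2 hΨ.1) fun o ih =>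
    image_weakDeriv_subset hApre hΨ hExt (derivIter_weakDeriv_subset hApre o) ih

/-- An order isomorphism between trees on unit spheres which maps weakly null extensions to
weakly null extensions satisfies `Ψ(A^(α)) ⊆ B^(α)` for every ordinal `α`. -/
theorem image_derivIter_subset
    (X Y : Type) [NormedAddCommGroup X] [NormedSpace ℝ X] [CompleteSpace X]
    [NormedAddCommGroup Y] [NormedSpace ℝ Y] [CompleteSpace Y]
    (A : Set (List X)) (B : Set (List Y))
    (hA : IsTreeOnSphere A) (hB : IsTreeOnSphere B)
    (Ψ : List X → List Y) (hΨ : IsTreeOrderIso A B Ψ)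
    (hExt : MapsWeaklyNullExtensions A Ψ) :
    ∀ α : Ordinal.{0}, Ψ '' derivIter weakDeriv A α ⊆ derivIter weakDeriv B α :=
  image_derivIter_subset_general X Y A B hA Ψ hΨ hExt

end
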